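/- arXiv:math-ph/0605034 — 2 statements merged into one kernel-verified Lean document; each statement's English description precedes it below -/
import Mathlib

section
/- Define the symmetrized kernel K_∞^s(z,w) = (K_∞(z,w) + K_∞(z, conj(w)))/2 where K_∞(z,w) = −(Re z + Re w + |z − w|). For γ(t) = e^{it}, 0 ≤ s, t ≤ π/2, s ≠ t, its t-derivative equals sin t − cos(s/2)cos(t/2) when s < t, and sin t + sin(s/2)sin(t/2) when t < s; consequently ∂K_∞^s(γ(t), γ(s))/∂t > 0 whenever t > π/3 and s ∈ [0, π/2], s ≠ t. -/
open Complex Real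

noncomputable def Kinf (z w : ℂ) : ℝ := -(z.re + w.re + ‖z - w‖)

noncomputable def KinfS (z w : ℂ) : ℝ := (Kinf z w + Kinf z ((starRingEnd ℂ) w)) / 2

/-!
On the unit circle `‖e^{iτ} - e^{is}‖ = 2 |sin ((τ - s) / 2)|`, so
`K_∞^s(e^{iτ}, e^{is}) = -(cos τ + cos s + |sin ((τ - s) / 2)| + |sin ((τ + s) / 2)|)`.
Near `τ = t` both sines have a fixed sign, and the sum-to-product formulas turn the kernel into
`-(cos τ + cos s + 2 cos (s/2) sin (τ/2))` when `s < t` and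
`-(cos τ + cos s + 2 sin (s/2) cos (τ/2))` when `t < s`, which are differentiated directly.
For `t > π/3` the first derivative is `cos (t/2) (2 sin (t/2) - cos (s/2)) > 0` since
`2 sin (t/2) > 1`, and the second is a sum of nonnegative terms with `sin t > 0`.
-/

lemma norm_exp_ofReal_mul_I_sub_exp (a b : ℝ) :
    ‖cexp (a * I) - cexp (b * I)‖ = 2 * |Real.sin ((a - b) / 2)| := by
  have h : cexp (a * I) - cexp (b * I)
      = cexp (b * I) * (cexp (I * ↑(a - b)) - 1) := by
    rw [mul_sub, ← Complex.exp_add, mul_one]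
    congr 2
    push_cast
    ring
  rw [h, norm_mul, norm_exp_ofReal_mul_I, one_mul, norm_exp_I_mul_ofReal_sub_one,
    Real.norm_eq_abs, abs_mul, abs_two]

lemma KinfS_exp_ofReal_mul_I (τ s : ℝ) :
    KinfS (cexp (τ * I)) (cexp (s * I))
      = -(Real.cos τ + Real.cos s + |Real.sin ((τ - s) / 2)| + |Real.sin ((τ + s) / 2)|) := by
  have hconj : (starRingEnd ℂ) (cexp (s * I)) = cexp (↑(-s) * I) := by
    rw [← Complex.exp_conj, map_mul, conj_I, conj_ofReal, ofReal_neg, neg_mul, mul_neg]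
  rw [KinfS, Kinf, Kinf, hconj, norm_exp_ofReal_mul_I_sub_exp, norm_exp_ofReal_mul_I_sub_exp,
    exp_ofReal_mul_I_re, exp_ofReal_mul_I_re, exp_ofReal_mul_I_re, Real.cos_neg, sub_neg_eq_add]
  ring

lemma KinfS_exp_ofReal_mul_I_of_le {τ s : ℝ} (hs : 0 ≤ s) (hsτ : s ≤ τ)
    (hτs : τ + s ≤ 2 * π) :
    KinfS (cexp (τ * I)) (cexp (s * I))
      = -(Real.cos τ + Real.cos s + 2 * Real.cos (s / 2) * Real.sin (τ / 2)) := by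
  rw [KinfS_exp_ofReal_mul_I,
    abs_of_nonneg (sin_nonneg_of_nonneg_of_le_pi (by linarith) (by linarith)),
    abs_of_nonneg (sin_nonneg_of_nonneg_of_le_pi (by linarith) (by linarith)),
    show (τ - s) / 2 = τ / 2 - s / 2 by ring, show (τ + s) / 2 = τ / 2 + s / 2 by ring,
    Real.sin_sub, Real.sin_add]
  ring

lemma KinfS_exp_ofReal_mul_I_of_abs_le {τ s : ℝ} (hτs : |τ| ≤ s) (hs : s ≤ π) :
    KinfS (cexp (τ * I)) (cexp (s * I))
      = -(Real.cos τ + Real.cos s + 2 * Real.sin (s / 2) * Real.cos (τ / 2)) := by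
  obtain ⟨h₁, h₂⟩ := abs_le.mp hτs
  rw [KinfS_exp_ofReal_mul_I,
    abs_of_nonpos (sin_nonpos_of_nonpos_of_neg_pi_le (by linarith) (by linarith)),
    abs_of_nonneg (sin_nonneg_of_nonneg_of_le_pi (by linarith) (by linarith)),
    show (τ - s) / 2 = τ / 2 - s / 2 by ring, show (τ + s) / 2 = τ / 2 + s / 2 by ring,
    Real.sin_sub, Real.sin_add]
  ring

lemma hasDerivAt_KinfS_exp_ofReal_mul_I_of_lt {s t : ℝ} (hs : 0 ≤ s) (hst : s < t)
    (hts : t + s < 2 * π) :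
    HasDerivAt (fun τ : ℝ => KinfS (cexp (τ * I)) (cexp (s * I)))
      (Real.sin t - Real.cos (s / 2) * Real.cos (t / 2)) t := by
  have hf := (((Real.hasDerivAt_cos t).add_const (Real.cos s)).add
    (((hasDerivAt_id t).div_const 2).sin.const_mul (2 * Real.cos (s / 2)))).neg
  refine (hf.congr_deriv (by simp only [id]; ring)).congr_of_eventuallyEq ?_
  filter_upwards [Ioo_mem_nhds hst (show t < 2 * π - s by linarith)] with τ hτ
  exact KinfS_exp_ofReal_mul_I_of_le hs hτ.1.le (by linarith [hτ.2])

lemma hasDerivAt_KinfS_exp_ofReal_mul_I_of_abs_lt {s t : ℝ} (hts : |t| < s) (hs : s ≤ π) :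
    HasDerivAt (fun τ : ℝ => KinfS (cexp (τ * I)) (cexp (s * I)))
      (Real.sin t + Real.sin (s / 2) * Real.sin (t / 2)) t := by
  have hf := (((Real.hasDerivAt_cos t).add_const (Real.cos s)).add
    (((hasDerivAt_id t).div_const 2).cos.const_mul (2 * Real.sin (s / 2)))).neg
  refine (hf.congr_deriv (by simp only [id]; ring)).congr_of_eventuallyEq ?_
  filter_upwards [(isOpen_lt continuous_abs continuous_const).mem_nhds hts] with τ hτ
  exact KinfS_exp_ofReal_mul_I_of_abs_le hτ.le hs

lemma sin_sub_mul_cos_half_pos {t : ℝ} (c : ℝ) (hc : c ≤ 1) (ht₁ : π / 3 < t)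
    (ht₂ : t < π) :
    0 < Real.sin t - c * Real.cos (t / 2) := by
  have hcos : 0 < Real.cos (t / 2) := cos_pos_of_mem_Ioo ⟨by linarith, by linarith⟩
  have hsin : 1 / 2 < Real.sin (t / 2) := by
    rw [← sin_pi_div_six]
    exact sin_lt_sin_of_lt_of_le_pi_div_two (by linarith) (by linarith) (by linarith)
  calc 0 < Real.cos (t / 2) * (2 * Real.sin (t / 2) - c) := mul_pos hcos (by linarith)
    _ = Real.sin t - c * Real.cos (t / 2) := by
      rw [show Real.sin t = Real.sin (2 * (t / 2)) by ring_nf, Real.sin_two_mul]; ring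

theorem KinfS_deriv (s t : ℝ) (hs : s ∈ Set.Icc 0 (π/2)) (ht : t ∈ Set.Icc 0 (π/2))
    (hst : s ≠ t) :
    let γ : ℝ → ℂ := fun τ => Complex.exp (τ * Complex.I)
    (s < t → HasDerivAt (fun τ => KinfS (γ τ) (γ s))
        (Real.sin t - Real.cos (s/2) * Real.cos (t/2)) t) ∧
    (t < s → HasDerivAt (fun τ => KinfS (γ τ) (γ s))
        (Real.sin t + Real.sin (s/2) * Real.sin (t/2)) t) ∧
    (π/3 < t → 0 < deriv (fun τ => KinfS (γ τ) (γ s)) t) := by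
  intro γ
  obtain ⟨hs₀, hs₁⟩ := hs
  obtain ⟨ht₀, ht₁⟩ := ht
  have hπ := pi_pos
  have hlt (h : s < t) := hasDerivAt_KinfS_exp_ofReal_mul_I_of_lt hs₀ h (by linarith)
  have hgt (h : t < s) :=
    hasDerivAt_KinfS_exp_ofReal_mul_I_of_abs_lt (abs_lt.mpr ⟨by linarith, h⟩) (by linarith)
  refine ⟨hlt, hgt, fun htπ => ?_⟩
  rcases hst.lt_or_gt with h | h
  · rw [(hlt h).deriv]
    exact sin_sub_mul_cos_half_pos _ (cos_le_one _) htπ (by linarith)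
  · rw [(hgt h).deriv]
    exact add_pos_of_pos_of_nonneg (sin_pos_of_pos_of_lt_pi (by linarith) (by linarith))
      (mul_nonneg (sin_nonneg_of_nonneg_of_le_pi (by linarith) (by linarith))
        (sin_nonneg_of_nonneg_of_le_pi (by linarith) (by linarith)))
end

section
/- Let A be a compact set in the open right half-plane. Assuming Frostman's lemma (that any compactly supported signed measure ν with ν = 0 total mass and ∬ |z−w| dν(z)dν(w) ≥ 0 must be zero), the minimizer of J(μ) = ∬ K_∞(z,w) dμ(z) dμ(w), K_∞(z,w) = −(Re z + Re w + |z − w|), over probability measures μ on A is unique. -/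
open Complex MeasureTheory

noncomputable def Jen (μ : Measure ℂ) : ℝ := ∫ z, ∫ w, Kinf z w ∂μ ∂μ

/-- Energy of a "signed measure" ν = ν₁ - ν₂ with respect to a kernel k. -/
noncomputable def sEnergy (ν₁ ν₂ : Measure ℂ) (k : ℂ → ℂ → ℝ) : ℝ :=
  (∫ z, ∫ w, k z w ∂ν₁ ∂ν₁) - (∫ z, ∫ w, k z w ∂ν₂ ∂ν₁)
    - (∫ z, ∫ w, k z w ∂ν₁ ∂ν₂) + (∫ z, ∫ w, k z w ∂ν₂ ∂ν₂)

/-! The energy is a quadratic form, so for two minimizers μ, μ' and their midpoint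
σ = (μ + μ')/2 the energy of the signed measure μ - μ' equals 2 (J μ + J μ') - 4 J σ ≤ 0.
The part Re z + Re w of -K_∞ contributes nothing to the energy of μ - μ', which has total
mass zero, so the energy of μ - μ' for the kernel |z - w| is nonnegative and Frostman's lemma
gives μ = μ'. All the integrals involved are finite since the kernels are continuous and the
measures are carried by a compact set. -/

open Function
open scoped ENNReal

section CompactSupport

variable {X : Type*} [TopologicalSpace X] [MeasurableSpace X] [OpensMeasurableSpace X]
  {A : Set X} {ν : Measure X}

lemma Continuous.integrable_of_measure_compl_eq_zero [T2Space X] [IsFiniteMeasure ν]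
    {f : X → ℝ} (hf : Continuous f) (hA : IsCompact A) (hν : ν Aᶜ = 0) : Integrable f ν := by
  rw [← Measure.restrict_eq_self_of_ae_mem (ae_iff.2 hν)]
  exact hf.continuousOn.integrableOn_compact hA

lemma Continuous.continuous_integral_of_measure_compl_eq_zero [FirstCountableTopology X]
    [LocallyCompactSpace X] [IsFiniteMeasure ν] {k : X → X → ℝ} (hk : Continuous (uncurry k))
    (hA : IsCompact A) (hν : ν Aᶜ = 0) : Continuous fun z => ∫ w, k z w ∂ν := by
  rw [← Measure.restrict_eq_self_of_ae_mem (ae_iff.2 hν)]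
  exact continuous_parametric_integral_of_continuous hk hA

end CompactSupport

noncomputable def doubleIntegral {X : Type*} [MeasurableSpace X] (k : X → X → ℝ)
    (ν₁ ν₂ : Measure X) : ℝ :=
  ∫ z, ∫ w, k z w ∂ν₂ ∂ν₁

lemma sEnergy_eq_doubleIntegral (ν₁ ν₂ : Measure ℂ) (k : ℂ → ℂ → ℝ) :
    sEnergy ν₁ ν₂ k = doubleIntegral k ν₁ ν₁ - doubleIntegral k ν₁ ν₂
      - doubleIntegral k ν₂ ν₁ + doubleIntegral k ν₂ ν₂ := rfl

namespace doubleIntegral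

variable {X : Type*} [MeasurableSpace X] (k : X → X → ℝ)

lemma smul_left (c : ℝ≥0∞) (ν₁ ν₂ : Measure X) :
    doubleIntegral k (c • ν₁) ν₂ = c.toReal * doubleIntegral k ν₁ ν₂ :=
  integral_smul_measure _ c

lemma smul_right (c : ℝ≥0∞) (ν₁ ν₂ : Measure X) :
    doubleIntegral k ν₁ (c • ν₂) = c.toReal * doubleIntegral k ν₁ ν₂ := by
  simp only [doubleIntegral, integral_smul_measure, smul_eq_mul, integral_const_mul]

variable [TopologicalSpace X] [OpensMeasurableSpace X] [T2Space X] [FirstCountableTopology X]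
  [LocallyCompactSpace X] {k} (hk : Continuous (uncurry k)) {A : Set X} (hA : IsCompact A)
  {ν₁ ν₂ ρ : Measure X} [IsFiniteMeasure ν₁] [IsFiniteMeasure ν₂] [IsFiniteMeasure ρ]
  (hν₁ : ν₁ Aᶜ = 0) (hν₂ : ν₂ Aᶜ = 0) (hρ : ρ Aᶜ = 0)

include hk hA hν₁ hν₂ hρ

lemma add_left : doubleIntegral k (ν₁ + ν₂) ρ = doubleIntegral k ν₁ ρ + doubleIntegral k ν₂ ρ :=
  integral_add_measure
    ((hk.continuous_integral_of_measure_compl_eq_zero hA hρ).integrable_of_measure_compl_eq_zero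
      hA hν₁)
    ((hk.continuous_integral_of_measure_compl_eq_zero hA hρ).integrable_of_measure_compl_eq_zero
      hA hν₂)

lemma add_right :
    doubleIntegral k ρ (ν₁ + ν₂) = doubleIntegral k ρ ν₁ + doubleIntegral k ρ ν₂ := by
  have hinner (z : X) : Continuous (k z) := hk.comp (Continuous.prodMk_right z)
  have houter {ν : Measure X} [IsFiniteMeasure ν] (hν : ν Aᶜ = 0) :
      Integrable (fun z => ∫ w, k z w ∂ν) ρ :=
    (hk.continuous_integral_of_measure_compl_eq_zero hA hν).integrable_of_measure_compl_eq_zero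
      hA hρ
  unfold doubleIntegral
  rw [← integral_add (houter hν₁) (houter hν₂)]
  congr 1 with z
  exact integral_add_measure ((hinner z).integrable_of_measure_compl_eq_zero hA hν₁)
    ((hinner z).integrable_of_measure_compl_eq_zero hA hν₂)

end doubleIntegral

lemma sEnergy_eq_two_mul_sub_four_mul_midpoint {k : ℂ → ℂ → ℝ} (hk : Continuous (uncurry k))
    {A : Set ℂ} (hA : IsCompact A) {ν₁ ν₂ : Measure ℂ} [IsFiniteMeasure ν₁] [IsFiniteMeasure ν₂]
    (hν₁ : ν₁ Aᶜ = 0) (hν₂ : ν₂ Aᶜ = 0) :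
    sEnergy ν₁ ν₂ k = 2 * (doubleIntegral k ν₁ ν₁ + doubleIntegral k ν₂ ν₂)
      - 4 * doubleIntegral k ((2 : ℝ≥0∞)⁻¹ • (ν₁ + ν₂)) ((2 : ℝ≥0∞)⁻¹ • (ν₁ + ν₂)) := by
  have hsum : (ν₁ + ν₂) Aᶜ = 0 := by simp [hν₁, hν₂]
  rw [sEnergy_eq_doubleIntegral, doubleIntegral.smul_left, doubleIntegral.smul_right,
    doubleIntegral.add_left hk hA hν₁ hν₂ hsum, doubleIntegral.add_right hk hA hν₁ hν₂ hν₁,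
    doubleIntegral.add_right hk hA hν₁ hν₂ hν₂]
  simp only [ENNReal.toReal_inv, ENNReal.toReal_ofNat]
  ring

lemma continuous_Kinf : Continuous (uncurry Kinf) := by
  unfold Kinf uncurry
  fun_prop

lemma doubleIntegral_Kinf {A : Set ℂ} (hA : IsCompact A) {ν₁ ν₂ : Measure ℂ}
    [IsProbabilityMeasure ν₁] [IsProbabilityMeasure ν₂] (hν₁ : ν₁ Aᶜ = 0) (hν₂ : ν₂ Aᶜ = 0) :
    doubleIntegral Kinf ν₁ ν₂ = -(∫ z, z.re ∂ν₁ + ∫ w, w.re ∂ν₂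
      + doubleIntegral (fun z w => ‖z - w‖) ν₁ ν₂) := by
  have hre {ν : Measure ℂ} [IsFiniteMeasure ν] (hν : ν Aᶜ = 0) :
      Integrable (fun w : ℂ => w.re) ν :=
    continuous_re.integrable_of_measure_compl_eq_zero hA hν
  have hdist : Continuous (uncurry fun z w : ℂ => ‖z - w‖) := by unfold uncurry; fun_prop
  have hinner (z : ℂ) : ∫ w, Kinf z w ∂ν₂ = -(z.re + ∫ w, w.re ∂ν₂ + ∫ w, ‖z - w‖ ∂ν₂) := by
    have hdist_z : Integrable (fun w => ‖z - w‖) ν₂ :=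
      (hdist.comp (Continuous.prodMk_right z)).integrable_of_measure_compl_eq_zero hA hν₂
    have hlin : Integrable (fun w : ℂ => z.re + w.re) ν₂ := (integrable_const _).add (hre hν₂)
    simp only [Kinf]
    rw [integral_neg, integral_add hlin hdist_z,
      integral_add (integrable_const _) (hre hν₂), integral_const, probReal_univ, one_smul]
  have houter : Integrable (fun z => ∫ w, ‖z - w‖ ∂ν₂) ν₁ :=
    (hdist.continuous_integral_of_measure_compl_eq_zero hA hν₂).integrable_of_measure_compl_eq_zero
      hA hν₁
  simp only [doubleIntegral, hinner]
  have hlin : Integrable (fun z : ℂ => z.re + ∫ w, w.re ∂ν₂) ν₁ :=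
    (hre hν₁).add (integrable_const _)
  rw [integral_neg, integral_add hlin houter,
    integral_add (hre hν₁) (integrable_const _), integral_const, probReal_univ, one_smul]

lemma sEnergy_Kinf {A : Set ℂ} (hA : IsCompact A) {ν₁ ν₂ : Measure ℂ}
    [IsProbabilityMeasure ν₁] [IsProbabilityMeasure ν₂] (hν₁ : ν₁ Aᶜ = 0) (hν₂ : ν₂ Aᶜ = 0) :
    sEnergy ν₁ ν₂ Kinf = -sEnergy ν₁ ν₂ (fun z w => ‖z - w‖) := by
  simp only [sEnergy_eq_doubleIntegral, doubleIntegral_Kinf hA hν₁ hν₂,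
    doubleIntegral_Kinf hA hν₂ hν₁, doubleIntegral_Kinf hA hν₁ hν₁, doubleIntegral_Kinf hA hν₂ hν₂]
  ring

theorem Kinf_equilibrium_unique_general (A : Set ℂ) (hA : IsCompact A)
    -- Frostman's lemma as a hypothesis:
    (frostman : ∀ ν₁ ν₂ : Measure ℂ, IsFiniteMeasure ν₁ → IsFiniteMeasure ν₂ →
      (∃ S : Set ℂ, IsCompact S ∧ ν₁ Sᶜ = 0 ∧ ν₂ Sᶜ = 0) →
      ν₁ Set.univ = ν₂ Set.univ →
      0 ≤ sEnergy ν₁ ν₂ (fun z w => ‖z - w‖) → ν₁ = ν₂)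
    (μ μ' : Measure ℂ) [IsProbabilityMeasure μ] [IsProbabilityMeasure μ']
    (hμA : μ Aᶜ = 0) (hμ'A : μ' Aᶜ = 0)
    (hmin : ∀ σ : Measure ℂ, IsProbabilityMeasure σ → σ Aᶜ = 0 → Jen μ ≤ Jen σ)
    (hmin' : ∀ σ : Measure ℂ, IsProbabilityMeasure σ → σ Aᶜ = 0 → Jen μ' ≤ Jen σ) :
    μ = μ' := by
  set σ : Measure ℂ := (2 : ℝ≥0∞)⁻¹ • (μ + μ')
  have hσ : IsProbabilityMeasure σ := ⟨by simp [σ, ENNReal.inv_two_add_inv_two]⟩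
  have hσA : σ Aᶜ = 0 := by simp [σ, hμA, hμ'A]
  have hKinf_nonpos : sEnergy μ μ' Kinf ≤ 0 := by
    have hμσ : doubleIntegral Kinf μ μ ≤ doubleIntegral Kinf σ σ := hmin σ hσ hσA
    have hμ'σ : doubleIntegral Kinf μ' μ' ≤ doubleIntegral Kinf σ σ := hmin' σ hσ hσA
    rw [sEnergy_eq_two_mul_sub_four_mul_midpoint continuous_Kinf hA hμA hμ'A]
    linarith
  refine frostman μ μ' inferInstance inferInstance ⟨A, hA, hμA, hμ'A⟩ (by simp) ?_
  linarith [sEnergy_Kinf hA hμA hμ'A]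

theorem Kinf_equilibrium_unique (A : Set ℂ) (hA : IsCompact A) (hAH : ∀ z ∈ A, 0 < z.re)
    -- Frostman's lemma as a hypothesis:
    (frostman : ∀ ν₁ ν₂ : Measure ℂ, IsFiniteMeasure ν₁ → IsFiniteMeasure ν₂ →
      (∃ S : Set ℂ, IsCompact S ∧ ν₁ Sᶜ = 0 ∧ ν₂ Sᶜ = 0) →
      ν₁ Set.univ = ν₂ Set.univ →
      0 ≤ sEnergy ν₁ ν₂ (fun z w => ‖z - w‖) → ν₁ = ν₂)
    (μ μ' : Measure ℂ) [IsProbabilityMeasure μ] [IsProbabilityMeasure μ']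
    (hμA : μ Aᶜ = 0) (hμ'A : μ' Aᶜ = 0)
    (hmin : ∀ σ : Measure ℂ, IsProbabilityMeasure σ → σ Aᶜ = 0 → Jen μ ≤ Jen σ)
    (hmin' : ∀ σ : Measure ℂ, IsProbabilityMeasure σ → σ Aᶜ = 0 → Jen μ' ≤ Jen σ) :
    μ = μ' :=
  Kinf_equilibrium_unique_general A hA frostman μ μ' hμA hμ'A hmin hmin'
end
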